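/- The Cobb–Douglas hypersurface xₙ = A·√(x₁ x₂ ⋯ x_{n−1}) in ℝⁿ (A > 0, all xᵢ > 0, n > 3) has identically vanishing sectional curvature: for the defining functions fᵢ = −λ log xᵢ (i ≤ n−1) and fₙ = 2λ log xₙ, the expression fᵢ'²fⱼ''fₙ'' + fⱼ'²fᵢ''fₙ'' + fₙ'²fᵢ''fⱼ'' vanishes identically on the hypersurface for all i < j ≤ n−1. -/
import Mathlib

lemma aux_deriv (c d : ℝ) (g : ℝ → ℝ) (hg : ∀ t, g t = c * Real.log t + d) :
    deriv g = fun t => c * t⁻¹ := by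
  have : g = fun t => c * Real.log t + d := funext hg
  subst this
  funext t
  rw [deriv_add_const, deriv_const_mul_field, Real.deriv_log']

lemma aux_deriv2 (c d : ℝ) (g : ℝ → ℝ) (hg : ∀ t, g t = c * Real.log t + d)
    (s : ℝ) (hs : s ≠ 0) : deriv (deriv g) s = -c / s ^ 2 := by
  rw [aux_deriv c d g hg]
  rw [deriv_const_mul_field, deriv_inv]
  field_simp

/-- The Cobb–Douglas hypersurface `xₙ = A√(x₁⋯x_{n−1})` (A > 0, all `xᵢ > 0`, n > 3)
has identically vanishing sectional curvature: with the separable defining functions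
`fᵢ(t) = −λ log t + βᵢ` (i ≤ n−1) and `fₙ(t) = 2λ log t + βₙ`, the curvature numerator
`fᵢ'²fⱼ''fₙ'' + fⱼ'²fᵢ''fₙ'' + fₙ'²fᵢ''fⱼ''` vanishes identically on the hypersurface
for all `1 ≤ i < j ≤ n−1`. -/
theorem stmt_17 {n : ℕ} (hn : 3 < n) (A lam : ℝ) (hA : 0 < A) (hlam : lam ≠ 0)
    (β : Fin n → ℝ) (f : Fin n → ℝ → ℝ)
    (hfi : ∀ i : Fin n, (i : ℕ) < n - 1 → ∀ t : ℝ, f i t = -lam * Real.log t + β i)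
    (hfn : ∀ t : ℝ, f ⟨n - 1, by omega⟩ t = 2 * lam * Real.log t + β ⟨n - 1, by omega⟩) :
    ∀ x : Fin n → ℝ, (∀ k, 0 < x k) →
      x ⟨n - 1, by omega⟩ =
        A * Real.sqrt (∏ i ∈ Finset.univ.filter (fun i : Fin n => (i : ℕ) < n - 1), x i) →
      ∀ i j : Fin n, (i : ℕ) < j → (j : ℕ) < n - 1 →
        (deriv (f i) (x i)) ^ 2 * deriv (deriv (f j)) (x j) *
            deriv (deriv (f ⟨n - 1, by omega⟩)) (x ⟨n - 1, by omega⟩) +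
          (deriv (f j) (x j)) ^ 2 * deriv (deriv (f i)) (x i) *
            deriv (deriv (f ⟨n - 1, by omega⟩)) (x ⟨n - 1, by omega⟩) +
          (deriv (f ⟨n - 1, by omega⟩) (x ⟨n - 1, by omega⟩)) ^ 2 *
            deriv (deriv (f i)) (x i) * deriv (deriv (f j)) (x j) = 0 := by
  intro x hx _ i j hij hj
  have hi : (i : ℕ) < n - 1 := lt_trans hij hj
  set a := x i with ha
  set b := x j with hb
  set c := x ⟨n - 1, by omega⟩ with hc
  have ha0 : a ≠ 0 := (hx i).ne'
  have hb0 : b ≠ 0 := (hx j).ne'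
  have hc0 : c ≠ 0 := (hx _).ne'
  have d1i : deriv (f i) a = -lam * a⁻¹ := by rw [aux_deriv (-lam) (β i) (f i) (hfi i hi)]
  have d1j : deriv (f j) b = -lam * b⁻¹ := by rw [aux_deriv (-lam) (β j) (f j) (hfi j hj)]
  have d1n : deriv (f ⟨n - 1, by omega⟩) c = 2 * lam * c⁻¹ := by
    rw [aux_deriv (2 * lam) _ _ hfn]
  have d2i : deriv (deriv (f i)) a = -(-lam) / a ^ 2 := aux_deriv2 _ _ _ (hfi i hi) a ha0
  have d2j : deriv (deriv (f j)) b = -(-lam) / b ^ 2 := aux_deriv2 _ _ _ (hfi j hj) b hb0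
  have d2n : deriv (deriv (f ⟨n - 1, by omega⟩)) c = -(2 * lam) / c ^ 2 :=
    aux_deriv2 _ _ _ hfn c hc0
  rw [d1i, d1j, d1n, d2i, d2j, d2n]
  field_simp
  ring
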